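/- arXiv:1603.08790 — 3 statements merged into one kernel-verified Lean document; each statement's English description precedes it below -/
import Mathlib

section
/- If F_N is a probability density on ℝ^N with zero mean (∫ v_k F_N(v) dv = 0 for every k) and finite second moment, then Φ[F_N] = γ Q[F_N] + (1−γ)(1/N) Σ_{j=1}^N R_j[F_N] is a probability density on ℝ^N with zero mean and finite second moment. -/
open MeasureTheory Real Finset

noncomputable section

/-- The state space of `N` one-dimensional velocities. -/
abbrev V (N : ℕ) := Fin N → ℝ

/-- A probability density on `ℝ^N`. -/
def IsProbDensity {N : ℕ} (F : V N → ℝ) : Prop :=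
  (∀ v, 0 ≤ F v) ∧ Integrable F ∧ ∫ v, F v = 1

/-- A probability density on `ℝ`. -/
def IsProbDensity1 (g : ℝ → ℝ) : Prop :=
  (∀ x, 0 ≤ g x) ∧ Integrable g ∧ ∫ x, g x = 1

/-- The velocity vector after the Kac collision of particles `i` and `j` with angle `θ`. -/
def collide {N : ℕ} (v : V N) (i j : Fin N) (θ : ℝ) : V N :=
  Function.update (Function.update v i (v i * Real.cos θ + v j * Real.sin θ)) j
    (-(v i) * Real.sin θ + v j * Real.cos θ)

/-- Kac's collision operator `Q`. -/
def QOp {N : ℕ} (F : V N → ℝ) : V N → ℝ := fun v =>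
  (N.choose 2 : ℝ)⁻¹ * ∑ i : Fin N, ∑ j : Fin N,
    if i < j then (2 * π)⁻¹ * ∫ θ in (0:ℝ)..(2 * π), F (collide v i j θ) else 0

/-- The thermostat operator `R_j` with reservoir distribution `g`. -/
def ROp {N : ℕ} (g : ℝ → ℝ) (j : Fin N) (F : V N → ℝ) : V N → ℝ := fun v =>
  ∫ w : ℝ, (2 * π)⁻¹ * ∫ θ in (0:ℝ)..(2 * π),
    g (w * Real.cos θ - v j * Real.sin θ) *
      F (Function.update v j (v j * Real.cos θ + w * Real.sin θ))

/-- The fixed point operator `Φ = γ Q + (1-γ) (1/N) ∑ⱼ Rⱼ`. -/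
def PhiOp {N : ℕ} (γ : ℝ) (g : ℝ → ℝ) (F : V N → ℝ) : V N → ℝ := fun v =>
  γ * QOp F v + (1 - γ) * (N : ℝ)⁻¹ * ∑ j : Fin N, ROp g j F v

/-- Fourier transform of a density on `ℝ^N`. -/
def ft {N : ℕ} (f : V N → ℝ) (ξ : V N) : ℂ :=
  ∫ v : V N, (f v : ℂ) * Complex.exp (-Complex.I * ((∑ i, v i * ξ i : ℝ) : ℂ))

/-- Fourier transform of a density on `ℝ`. -/
def ft1 (f : ℝ → ℝ) (ξ : ℝ) : ℂ :=
  ∫ v : ℝ, (f v : ℂ) * Complex.exp (-Complex.I * ((v * ξ : ℝ) : ℂ))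

/-- The Gabetta–Toscani–Wennberg distance on `ℝ^N`. -/
def dGTW {N : ℕ} (f h : V N → ℝ) : ℝ :=
  ⨆ ξ : {ξ : V N // ξ ≠ 0}, ‖ft f ξ.1 - ft h ξ.1‖ / (∑ i, (ξ.1 i) ^ 2)

/-- The `T1` distance on `ℝ^N`. -/
def dT1 {N : ℕ} (f h : V N → ℝ) : ℝ :=
  ⨆ ξ : {ξ : V N // ξ ≠ 0}, ‖ft f ξ.1 - ft h ξ.1‖ / Real.sqrt (∑ i, (ξ.1 i) ^ 2)

/-- The Gabetta–Toscani–Wennberg distance on `ℝ`. -/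
def dGTW1 (f h : ℝ → ℝ) : ℝ :=
  ⨆ ξ : {ξ : ℝ // ξ ≠ 0}, ‖ft1 f ξ.1 - ft1 h ξ.1‖ / (ξ.1) ^ 2

/-- The `T1` distance on `ℝ`. -/
def dT11 (f h : ℝ → ℝ) : ℝ :=
  ⨆ ξ : {ξ : ℝ // ξ ≠ 0}, ‖ft1 f ξ.1 - ft1 h ξ.1‖ / |ξ.1|

/-- `F : ℝ → V N → ℝ` is a solution of the coupled Kac master equation
`∂ₜ F = -λN(I-Q)[F] - μ ∑ⱼ (I-Rⱼ)[F]`. -/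
def IsSolution {N : ℕ} (lam mu : ℝ) (g : ℝ → ℝ) (F : ℝ → V N → ℝ) : Prop :=
  (∀ t, IsProbDensity (F t)) ∧
    ∀ t v, HasDerivAt (fun s => F s v)
      (-(lam * N) * (F t v - QOp (F t) v) - mu * ∑ j : Fin N, (F t v - ROp g j (F t) v)) t

/-- `N`-fold tensor power of a density on `ℝ`. -/
def tensorPow (f : ℝ → ℝ) (N : ℕ) : V N → ℝ := fun v => ∏ i, f (v i)

/-- First marginal of a density on `ℝ^N`. -/
def marg1 {N : ℕ} (F : V N → ℝ) : ℝ → ℝ := fun x =>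
  ∫ w : V (N - 1),
    F (fun i => if h : (i : ℕ) = 0 then x else w ⟨(i : ℕ) - 1, by have := i.isLt; omega⟩)

/-- The `k`-th marginal of a density on `ℝ^N`. -/
def marg {N : ℕ} (k : ℕ) (F : V N → ℝ) : V k → ℝ := fun u =>
  ∫ w : V (N - k),
    F (fun i => if h : (i : ℕ) < k then u ⟨(i : ℕ), h⟩
        else w ⟨(i : ℕ) - k, by have := i.isLt; omega⟩)

/-- A density symmetric under permutations of the variables. -/
def IsSymmetric {N : ℕ} (F : V N → ℝ) : Prop :=
  ∀ σ : Equiv.Perm (Fin N), ∀ v : V N, F (v ∘ σ) = F v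

/-- `π` is a coupling of `μ` and `ν`. -/
def Coupling {α β : Type*} [MeasurableSpace α] [MeasurableSpace β]
    (γ : Measure (α × β)) (μ : Measure α) (ν : Measure β) : Prop :=
  γ.map Prod.fst = μ ∧ γ.map Prod.snd = ν

/-- Wasserstein-2 distance between measures on `ℝ^N` (Euclidean cost). -/
def W2 {N : ℕ} (μ ν : Measure (V N)) : ℝ :=
  sInf {c | ∃ γ : Measure (V N × V N), Coupling γ μ ν ∧
    c = Real.sqrt (∫ p, ∑ i, (p.1 i - p.2 i) ^ 2 ∂γ)}

/-- Wasserstein-2 distance between measures on `ℝ`. -/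
def W2r (μ ν : Measure ℝ) : ℝ :=
  sInf {c | ∃ γ : Measure (ℝ × ℝ), Coupling γ μ ν ∧
    c = Real.sqrt (∫ p, (p.1 - p.2) ^ 2 ∂γ)}

/-- The measure on `ℝ^N` with density `F`. -/
def densMeasure {N : ℕ} (F : V N → ℝ) : Measure (V N) :=
  volume.withDensity fun v => ENNReal.ofReal (F v)

/-- The measure on `ℝ` with density `f`. -/
def densMeasure1 (f : ℝ → ℝ) : Measure ℝ :=
  volume.withDensity fun x => ENNReal.ofReal (f x)

/-!
`Q` and every `R_j` are averages of `F` over rotations of a coordinate plane: for `R_j` it is the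
plane of `v_j` and the reservoir velocity `w` in `ℝ^(N+1)`, applied to `g(w) F(v)`, after which
`w` is integrated out. Rotations preserve Lebesgue measure and `∑ v_k²`, so these averages
preserve mass and the finite second moment; they preserve the zero mean because a coordinate of a
rotated vector is a linear function of the original one, and a linear function has zero mean
against a centred density. Finally, densities with these properties form a convex set, and `Φ` is
a convex combination of such averages.
-/

section Collision

variable {N : ℕ} {i j : Fin N}

lemma collide_apply (v : V N) (θ : ℝ) (k : Fin N) :
    collide v i j θ k =
      if k = j then -(v i) * Real.sin θ + v j * Real.cos θ
      else if k = i then v i * Real.cos θ + v j * Real.sin θ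
      else v k := by
  simp only [collide, Function.update_apply]

lemma collide_neg_collide (hij : i ≠ j) (v : V N) (θ : ℝ) :
    collide (collide v i j θ) i j (-θ) = v := by
  funext k
  have h := Real.sin_sq_add_cos_sq θ
  simp only [collide_apply, Real.sin_neg, Real.cos_neg, if_neg hij, ↓reduceIte]
  split_ifs with hkj hki
  · subst hkj; linear_combination (v k) * h
  · subst hki; linear_combination (v k) * h
  · rfl

lemma sum_sq_collide (hij : i ≠ j) (v : V N) (θ : ℝ) :
    ∑ k, collide v i j θ k ^ 2 = ∑ k, v k ^ 2 := by
  rw [← sub_eq_zero, ← Finset.sum_sub_distrib,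
    Fintype.sum_eq_add i j hij fun k hk => by simp [collide_apply, hk.1, hk.2]]
  simp only [collide_apply, if_neg hij, ↓reduceIte]
  linear_combination (v i ^ 2 + v j ^ 2) * Real.sin_sq_add_cos_sq θ

lemma measurable_collide_uncurry (i j : Fin N) :
    Measurable fun p : ℝ × V N => collide p.2 i j p.1 := by
  unfold collide
  fun_prop

variable (i j) in
def collideLinearMap (θ : ℝ) : V N →ₗ[ℝ] V N where
  toFun v := collide v i j θ
  map_add' u v := by
    funext k
    simp only [collide, Function.update_apply, Pi.add_apply]
    split_ifs <;> ring
  map_smul' c v := by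
    funext k
    simp only [collide, Function.update_apply, Pi.smul_apply, smul_eq_mul, RingHom.id_apply]
    split_ifs <;> ring

lemma measurePreserving_collide (hij : i ≠ j) (θ : ℝ) :
    MeasurePreserving (fun v : V N => collide v i j θ) := by
  let L : EuclideanSpace ℝ (Fin N) →ₗᵢ[ℝ] EuclideanSpace ℝ (Fin N) :=
    { toLinearMap := (WithLp.linearEquiv 2 ℝ (V N)).symm.toLinearMap ∘ₗ
        collideLinearMap i j θ ∘ₗ (WithLp.linearEquiv 2 ℝ (V N)).toLinearMap
      norm_map' := fun v => by
        simp [EuclideanSpace.norm_eq, collideLinearMap, sum_sq_collide hij] }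
  exact (PiLp.volume_preserving_ofLp _).comp
    ((L.toLinearIsometryEquiv rfl).measurePreserving.comp (PiLp.volume_preserving_toLp _))

end Collision

section CentredDensity

variable {N : ℕ}

structure IsCentredDensity (F : V N → ℝ) : Prop where
  nonneg : ∀ v, 0 ≤ F v
  integrable : Integrable F
  integral_eq_one : ∫ v, F v = 1
  integral_coord_mul : ∀ k, ∫ v, v k * F v = 0
  integrable_sumSq_mul : Integrable fun v => (∑ k, v k ^ 2) * F v

lemma abs_le_one_add_sumSq (v : V N) (k : Fin N) : |v k| ≤ 1 + ∑ m, v m ^ 2 := by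
  have hk : v k ^ 2 ≤ ∑ m, v m ^ 2 :=
    Finset.single_le_sum (fun m _ => sq_nonneg (v m)) (Finset.mem_univ k)
  nlinarith [sq_abs (v k), sq_nonneg (|v k| - 1)]

namespace IsCentredDensity

variable {F : V N → ℝ}

lemma integrable_coord_mul (hF : IsCentredDensity F) (k : Fin N) :
    Integrable fun v => v k * F v := by
  refine (hF.integrable.add hF.integrable_sumSq_mul).mono'
    ((measurable_pi_apply k).aestronglyMeasurable.mul hF.integrable.1) (ae_of_all _ fun v => ?_)
  rw [norm_mul, Real.norm_eq_abs, Real.norm_of_nonneg (hF.nonneg v), Pi.add_apply, ← one_add_mul]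
  exact mul_le_mul_of_nonneg_right (abs_le_one_add_sumSq v k) (hF.nonneg v)

lemma integral_linear_mul (hF : IsCentredDensity F) (ℓ : V N →ₗ[ℝ] ℝ) :
    ∫ v, ℓ v * F v = 0 := by
  have hexpand : ∀ v, ℓ v * F v = ∑ m, ℓ (fun n => if m = n then 1 else 0) * (v m * F v) :=
    fun v => by
      rw [ℓ.pi_apply_eq_sum_univ v, Finset.sum_mul]
      exact Finset.sum_congr rfl fun m _ => by rw [smul_eq_mul]; ring
  simp_rw [hexpand]
  rw [integral_finsetSum _ fun m _ => (hF.integrable_coord_mul m).const_mul _]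
  simp [integral_const_mul, hF.integral_coord_mul]

end IsCentredDensity

lemma convex_setOf_isCentredDensity : Convex ℝ {F : V N → ℝ | IsCentredDensity F} := by
  intro F hF G hG a b ha hb hab
  refine ⟨fun v => ?_, (hF.integrable.smul a).add (hG.integrable.smul b), ?_, fun k => ?_, ?_⟩
  · simp only [Pi.add_apply, Pi.smul_apply, smul_eq_mul]
    exact add_nonneg (mul_nonneg ha (hF.nonneg v)) (mul_nonneg hb (hG.nonneg v))
  · simp only [Pi.add_apply, Pi.smul_apply, smul_eq_mul]
    rw [integral_add (hF.integrable.const_mul a) (hG.integrable.const_mul b), integral_const_mul,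
      integral_const_mul, hF.integral_eq_one, hG.integral_eq_one, mul_one, mul_one, hab]
  · simp only [Pi.add_apply, Pi.smul_apply, smul_eq_mul, mul_add, mul_left_comm _ a,
      mul_left_comm _ b]
    rw [integral_add ((hF.integrable_coord_mul k).const_mul a)
      ((hG.integrable_coord_mul k).const_mul b), integral_const_mul, integral_const_mul,
      hF.integral_coord_mul, hG.integral_coord_mul, mul_zero, mul_zero, add_zero]
  · simp only [Pi.add_apply, Pi.smul_apply, smul_eq_mul, mul_add, mul_left_comm _ a,
      mul_left_comm _ b]
    exact (hF.integrable_sumSq_mul.const_mul a).add (hG.integrable_sumSq_mul.const_mul b)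

lemma IsCentredDensity.finset_average {ι : Type*} {s : Finset ι} (hs : s.Nonempty)
    {F : ι → V N → ℝ} (hF : ∀ i ∈ s, IsCentredDensity (F i)) :
    IsCentredDensity (∑ i ∈ s, ((#s : ℕ) : ℝ)⁻¹ • F i) :=
  convex_setOf_isCentredDensity.sum_mem (fun _ _ => by positivity)
    (by rw [Finset.sum_const, nsmul_eq_mul, mul_inv_cancel₀ (by simpa using hs.ne_empty)]) hF

end CentredDensity

section SkewProduct

variable {Θ X Y E : Type*} [MeasurableSpace Θ] [MeasurableSpace X] [MeasurableSpace Y]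
  [NormedAddCommGroup E] {ν : Measure Θ} {μ : Measure X}

lemma MeasureTheory.MeasurePreserving.integral_comp_of_aestronglyMeasurable [NormedSpace ℝ E]
    {μY : Measure Y} {f : X → Y} (hf : MeasurePreserving f μ μY) {G : Y → E}
    (hG : AEStronglyMeasurable G μY) :
    ∫ x, G (f x) ∂μ = ∫ y, G y ∂μY := by
  rw [← hf.map_eq] at hG ⊢
  exact (integral_map hf.measurable.aemeasurable hG).symm

variable [IsFiniteMeasure ν] [SFinite μ] {T : Θ → X → X}
  (hT : Measurable fun p : Θ × X => T p.1 p.2) (hTμ : ∀ θ, MeasurePreserving (T θ) μ μ)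
include hT hTμ

lemma integrable_comp_skew {G : X → E} (hG : Integrable G μ) :
    Integrable (fun p : Θ × X => G (T p.1 p.2)) (ν.prod μ) :=
  ((MeasurePreserving.id ν).skew_product hT (ae_of_all _ fun θ => (hTμ θ).map_eq)
    ).integrable_comp_of_integrable (hG.comp_snd ν)

lemma integral_integral_comp [NormedSpace ℝ E] [CompleteSpace E] {G : X → E}
    (hG : Integrable G μ) :
    ∫ x, ∫ θ, G (T θ x) ∂ν ∂μ = ν.real Set.univ • ∫ x, G x ∂μ := by
  rw [integral_integral_swap (f := fun x θ => G (T θ x))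
    (integrable_comp_skew (ν := ν) hT hTμ hG).swap]
  simp_rw [(hTμ _).integral_comp_of_aestronglyMeasurable hG.1]
  rw [integral_const]

lemma integrable_mul_comp_skew {φ ρ G : X → ℝ} (hφ : Measurable φ) (hG0 : ∀ x, 0 ≤ G x)
    (hG : Integrable G μ) (hρG : Integrable (fun x => ρ x * G x) μ)
    (hφρ : ∀ θ x, |φ x| ≤ ρ (T θ x)) :
    Integrable (fun p : Θ × X => φ p.2 * G (T p.1 p.2)) (ν.prod μ) := by
  refine (integrable_comp_skew hT hTμ hρG).mono'
    ((hφ.comp measurable_snd).aestronglyMeasurable.mul (integrable_comp_skew hT hTμ hG).1)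
    (ae_of_all _ fun p => ?_)
  rw [norm_mul, Real.norm_eq_abs, Real.norm_of_nonneg (hG0 _)]
  exact mul_le_mul_of_nonneg_right (hφρ _ _) (hG0 _)

end SkewProduct

section RotationAverage

variable {N : ℕ} {i j : Fin N}

variable (i j) in
def rotAvg (G : V N → ℝ) (v : V N) : ℝ :=
  (2 * π)⁻¹ * ∫ θ in (0:ℝ)..(2 * π), G (collide v i j θ)

lemma rotAvg_eq_integral (G : V N → ℝ) (v : V N) :
    rotAvg i j G v = (2 * π)⁻¹ * ∫ θ in Set.Ioc 0 (2 * π), G (collide v i j θ) := by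
  rw [rotAvg, intervalIntegral.integral_of_le (by positivity)]

lemma rotAvg_nonneg {G : V N → ℝ} (hG : ∀ v, 0 ≤ G v) (v : V N) : 0 ≤ rotAvg i j G v :=
  mul_nonneg (by positivity) (intervalIntegral.integral_nonneg (by positivity) fun _ _ => hG _)

lemma integrable_rotAvg (hij : i ≠ j) {G : V N → ℝ} (hG : Integrable G) :
    Integrable (rotAvg i j G) := by
  rw [show rotAvg i j G = _ from funext (rotAvg_eq_integral G)]
  exact ((integrable_comp_skew (measurable_collide_uncurry i j)
    (measurePreserving_collide hij) hG).integral_prod_right).const_mul _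

lemma integral_rotAvg (hij : i ≠ j) {G : V N → ℝ} (hG : Integrable G) :
    ∫ v, rotAvg i j G v = ∫ v, G v := by
  simp_rw [rotAvg_eq_integral, integral_const_mul]
  rw [integral_integral_comp (measurable_collide_uncurry i j) (measurePreserving_collide hij) hG,
    smul_eq_mul, measureReal_restrict_apply_univ, Real.volume_real_Ioc_of_le (by positivity),
    sub_zero, inv_mul_cancel_left₀ (by positivity)]

lemma sumSq_mul_rotAvg (hij : i ≠ j) (G : V N → ℝ) (v : V N) :
    (∑ k, v k ^ 2) * rotAvg i j G v = rotAvg i j (fun u => (∑ k, u k ^ 2) * G u) v := by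
  simp only [rotAvg, sum_sq_collide hij, intervalIntegral.integral_const_mul]
  ring

lemma IsCentredDensity.integral_coord_mul_comp_collide {G : V N → ℝ}
    (hG : IsCentredDensity G) (hij : i ≠ j) (k : Fin N) (θ : ℝ) :
    ∫ v, v k * G (collide v i j θ) = 0 := by
  let ℓ : V N →ₗ[ℝ] ℝ := LinearMap.proj k ∘ₗ collideLinearMap i j (-θ)
  have hℓ : Measurable ℓ := ℓ.continuous_of_finiteDimensional.measurable
  calc ∫ v, v k * G (collide v i j θ)
      = ∫ v, ℓ (collide v i j θ) * G (collide v i j θ) := by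
        simp [ℓ, collideLinearMap, collide_neg_collide hij]
    _ = ∫ u, ℓ u * G u :=
        (measurePreserving_collide hij θ).integral_comp_of_aestronglyMeasurable
          (hℓ.aestronglyMeasurable.mul hG.integrable.1)
    _ = 0 := hG.integral_linear_mul ℓ

lemma IsCentredDensity.integral_coord_mul_rotAvg {G : V N → ℝ}
    (hG : IsCentredDensity G) (hij : i ≠ j) (k : Fin N) :
    ∫ v, v k * rotAvg i j G v = 0 := by
  have hjoint : Integrable (fun p : ℝ × V N => p.2 k * G (collide p.2 i j p.1))
      ((volume.restrict (Set.Ioc 0 (2 * π))).prod volume) :=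
    integrable_mul_comp_skew (measurable_collide_uncurry i j) (measurePreserving_collide hij)
      (ρ := fun u => 1 + ∑ m, u m ^ 2) (measurable_pi_apply k) hG.nonneg hG.integrable
      ((hG.integrable.add hG.integrable_sumSq_mul).congr
        (ae_of_all _ fun v => by simp only [Pi.add_apply]; ring))
      fun θ v => by simpa only [sum_sq_collide hij] using abs_le_one_add_sumSq v k
  calc ∫ v, v k * rotAvg i j G v
      = (2 * π)⁻¹ * ∫ v, ∫ θ in Set.Ioc 0 (2 * π), v k * G (collide v i j θ) := by
        rw [← integral_const_mul]
        congr 1 with v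
        rw [rotAvg_eq_integral, integral_const_mul]
        ring
    _ = (2 * π)⁻¹ * ∫ θ in Set.Ioc 0 (2 * π), ∫ v, v k * G (collide v i j θ) := by
        rw [integral_integral_swap (f := fun v θ => v k * G (collide v i j θ)) hjoint.swap]
    _ = 0 := by simp [hG.integral_coord_mul_comp_collide hij]

lemma IsCentredDensity.rotAvg {G : V N → ℝ} (hG : IsCentredDensity G) (hij : i ≠ j) :
    IsCentredDensity (rotAvg i j G) where
  nonneg := rotAvg_nonneg hG.nonneg
  integrable := integrable_rotAvg hij hG.integrable
  integral_eq_one := by rw [integral_rotAvg hij hG.integrable, hG.integral_eq_one]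
  integral_coord_mul := hG.integral_coord_mul_rotAvg hij
  integrable_sumSq_mul := by
    simp_rw [sumSq_mul_rotAvg hij]
    exact integrable_rotAvg hij hG.integrable_sumSq_mul

end RotationAverage

section HeadCoordinate

variable {N : ℕ}

lemma measurePreserving_cons :
    MeasurePreserving (fun p : ℝ × V N => (Fin.cons p.1 p.2 : V (N + 1))) := by
  convert (volume_preserving_piFinSuccAbove (fun _ : Fin (N + 1) => ℝ) 0).symm with p
  simp
  rfl

lemma measurableEmbedding_cons :
    MeasurableEmbedding fun p : ℝ × V N => (Fin.cons p.1 p.2 : V (N + 1)) := by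
  convert (MeasurableEquiv.piFinSuccAbove (fun _ : Fin (N + 1) => ℝ) 0).symm.measurableEmbedding
    with p
  simp
  rfl

lemma integrable_comp_cons_iff {H : V (N + 1) → ℝ} :
    Integrable (fun p : ℝ × V N => H (Fin.cons p.1 p.2)) (volume.prod volume) ↔ Integrable H :=
  measurePreserving_cons.integrable_comp_emb measurableEmbedding_cons

lemma integral_comp_cons (H : V (N + 1) → ℝ) :
    ∫ p : ℝ × V N, H (Fin.cons p.1 p.2) ∂(volume.prod volume) = ∫ u, H u :=
  measurePreserving_cons.integral_comp measurableEmbedding_cons H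

def tailMarginal (H : V (N + 1) → ℝ) (v : V N) : ℝ := ∫ w, H (Fin.cons w v)

lemma integrable_tailMarginal {H : V (N + 1) → ℝ} (hH : Integrable H) :
    Integrable (tailMarginal H) :=
  (integrable_comp_cons_iff.2 hH).integral_prod_right

lemma integral_tailMarginal {H : V (N + 1) → ℝ} (hH : Integrable H) :
    ∫ v, tailMarginal H v = ∫ u, H u := by
  rw [← integral_comp_cons, integral_prod_symm _ (integrable_comp_cons_iff.2 hH)]
  rfl

lemma mul_tailMarginal (c : V N → ℝ) (H : V (N + 1) → ℝ) (v : V N) :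
    c v * tailMarginal H v = tailMarginal (fun u => c (Fin.tail u) * H u) v := by
  simp [tailMarginal, integral_const_mul]

lemma IsCentredDensity.tailMarginal {H : V (N + 1) → ℝ} (hH : IsCentredDensity H) :
    IsCentredDensity (tailMarginal H) where
  nonneg v := integral_nonneg fun w => hH.nonneg _
  integrable := integrable_tailMarginal hH.integrable
  integral_eq_one := by rw [integral_tailMarginal hH.integrable, hH.integral_eq_one]
  integral_coord_mul k := by
    simp_rw [mul_tailMarginal (· k)]
    exact (integral_tailMarginal (hH.integrable_coord_mul k.succ)).trans (hH.integral_coord_mul _)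
  integrable_sumSq_mul := by
    simp_rw [mul_tailMarginal (fun v => ∑ m, v m ^ 2)]
    refine integrable_tailMarginal (hH.integrable_sumSq_mul.mono'
      ((by fun_prop : Measurable fun u : V (N + 1) => ∑ m, Fin.tail u m ^ 2
        ).aestronglyMeasurable.mul hH.integrable.1) (ae_of_all _ fun u => ?_))
    rw [norm_mul, Real.norm_of_nonneg (hH.nonneg u), Real.norm_of_nonneg (by positivity),
      Fin.sum_univ_succ]
    exact mul_le_mul_of_nonneg_right (le_add_of_nonneg_left (sq_nonneg _)) (hH.nonneg u)

def consProd (g : ℝ → ℝ) (F : V N → ℝ) (u : V (N + 1)) : ℝ := g (u 0) * F (Fin.tail u)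

@[simp]
lemma consProd_cons (g : ℝ → ℝ) (F : V N → ℝ) (w : ℝ) (v : V N) :
    consProd g F (Fin.cons w v) = g w * F v := by
  simp [consProd]

lemma IsCentredDensity.consProd {g : ℝ → ℝ} (hg : IsProbDensity1 g)
    (hgmean : ∫ x, x * g x = 0) (hg2 : Integrable fun x => x ^ 2 * g x)
    {F : V N → ℝ} (hF : IsCentredDensity F) : IsCentredDensity (consProd g F) where
  nonneg u := mul_nonneg (hg.1 _) (hF.nonneg _)
  integrable := integrable_comp_cons_iff.1 (by simpa using hg.2.1.mul_prod hF.integrable)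
  integral_eq_one := by
    rw [← integral_comp_cons]
    simp [integral_prod_mul, hg.2.2, hF.integral_eq_one]
  integral_coord_mul m := by
    rw [← integral_comp_cons]
    induction m using Fin.cases with
    | zero =>
      simp only [Fin.cons_zero, consProd_cons, ← mul_assoc]
      rw [integral_prod_mul (fun x => x * g x) F, hgmean, zero_mul]
    | succ k =>
      simp only [Fin.cons_succ, consProd_cons, mul_left_comm _ (g _)]
      rw [integral_prod_mul g (fun v => v k * F v), hF.integral_coord_mul, mul_zero]
  integrable_sumSq_mul := by
    refine integrable_comp_cons_iff.1 ?_
    have h := (hg2.mul_prod hF.integrable).add (hg.2.1.mul_prod hF.integrable_sumSq_mul)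
    refine h.congr (ae_of_all _ fun p => ?_)
    simp [Fin.sum_univ_succ]
    ring

end HeadCoordinate

section KacOperators

variable {N : ℕ}

lemma ROp_eq_tailMarginal (g : ℝ → ℝ) (j : Fin N) (F : V N → ℝ) :
    ROp g j F = tailMarginal (rotAvg j.succ 0 (consProd g F)) := by
  funext v
  refine integral_congr_ae (ae_of_all _ fun w => ?_)
  simp only [rotAvg]
  congr 2 with θ
  rw [consProd]
  congr 1
  · simp only [collide_apply, if_true, Fin.cons_zero, Fin.cons_succ]
    ring_nf
  · congr 1 with k
    simp only [Fin.tail, collide_apply, Function.update_apply, Fin.succ_ne_zero, Fin.succ_inj,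
      Fin.cons_zero, Fin.cons_succ, if_false]

lemma IsCentredDensity.ROp {g : ℝ → ℝ} (hg : IsProbDensity1 g)
    (hgmean : ∫ x, x * g x = 0) (hg2 : Integrable fun x => x ^ 2 * g x)
    {F : V N → ℝ} (hF : IsCentredDensity F) (j : Fin N) : IsCentredDensity (ROp g j F) := by
  rw [ROp_eq_tailMarginal]
  exact ((hF.consProd hg hgmean hg2).rotAvg (Fin.succ_ne_zero j)).tailMarginal

lemma QOp_eq_average (F : V N → ℝ) :
    QOp F = ∑ p ∈ {p : Fin N × Fin N | p.1 < p.2},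
      ((#{p : Fin N × Fin N | p.1 < p.2} : ℕ) : ℝ)⁻¹ • rotAvg p.1 p.2 F := by
  rw [Fintype.card_product_filter_lt, Fintype.card_fin]
  funext v
  simp [QOp, rotAvg, Finset.sum_filter, Finset.mul_sum, ← Finset.univ_product_univ,
    Finset.sum_product]

lemma IsCentredDensity.QOp (hN : 2 ≤ N) {F : V N → ℝ} (hF : IsCentredDensity F) :
    IsCentredDensity (QOp F) := by
  rw [QOp_eq_average]
  refine IsCentredDensity.finset_average (Finset.card_pos.1 ?_)
    fun p hp => hF.rotAvg (Finset.mem_filter.1 hp).2.ne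
  rw [Fintype.card_product_filter_lt, Fintype.card_fin]
  exact Nat.choose_pos hN

end KacOperators

theorem statement_10_general (N : ℕ) (hN : 2 ≤ N) (lam mu : ℝ) (hlam : 0 < lam) (hmu : 0 < mu)
    (g : ℝ → ℝ) (hg : IsProbDensity1 g)
    (hgmean : ∫ x, x * g x = 0)
    (hg2 : Integrable (fun x => x ^ 2 * g x))
    (F : V N → ℝ) (hF : IsProbDensity F)
    (hFmean : ∀ k : Fin N, ∫ v : V N, v k * F v = 0)
    (hF2 : Integrable (fun v : V N => (∑ i, v i ^ 2) * F v)) :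
    IsProbDensity (PhiOp (lam / (lam + mu)) g F) ∧
      (∀ k : Fin N, ∫ v : V N, v k * PhiOp (lam / (lam + mu)) g F v = 0) ∧
      Integrable (fun v : V N => (∑ i, v i ^ 2) * PhiOp (lam / (lam + mu)) g F v) := by
  set γ := lam / (lam + mu)
  have hγ : 0 ≤ γ ∧ 0 ≤ 1 - γ := ⟨by positivity,
    sub_nonneg.2 (div_le_one_of_le₀ (by linarith) (by positivity))⟩
  have hF' : IsCentredDensity F := ⟨hF.1, hF.2.1, hF.2.2, hFmean, hF2⟩
  have hR := IsCentredDensity.finset_average (s := univ) ⟨⟨0, by omega⟩, mem_univ _⟩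
    fun j _ => hF'.ROp hg hgmean hg2 j
  have hΦ : IsCentredDensity (PhiOp γ g F) := by
    have hmix : IsCentredDensity (γ • QOp F + (1 - γ) • _) :=
      convex_setOf_isCentredDensity (hF'.QOp hN) hR hγ.1 hγ.2 (add_sub_cancel γ 1)
    convert hmix using 1
    funext v
    simp [PhiOp, Finset.mul_sum, mul_assoc]
  exact ⟨⟨hΦ.nonneg, hΦ.integrable, hΦ.integral_eq_one⟩, hΦ.integral_coord_mul,
    hΦ.integrable_sumSq_mul⟩

theorem statement_10 (N : ℕ) (hN : 2 ≤ N) (lam mu : ℝ) (hlam : 0 < lam) (hmu : 0 < mu)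
    (g : ℝ → ℝ) (hg : IsProbDensity1 g)
    (hg1 : Integrable (fun x => x * g x)) (hgmean : ∫ x, x * g x = 0)
    (hg2 : Integrable (fun x => x ^ 2 * g x))
    (F : V N → ℝ) (hF : IsProbDensity F)
    (hFmean : ∀ k : Fin N, ∫ v : V N, v k * F v = 0)
    (hF2 : Integrable (fun v : V N => (∑ i, v i ^ 2) * F v)) :
    IsProbDensity (PhiOp (lam / (lam + mu)) g F) ∧
      (∀ k : Fin N, ∫ v : V N, v k * PhiOp (lam / (lam + mu)) g F v = 0) ∧
      Integrable (fun v : V N => (∑ i, v i ^ 2) * PhiOp (lam / (lam + mu)) g F v) :=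
  statement_10_general N hN lam mu hlam hmu g hg hgmean hg2 F hF hFmean hF2

end
end

section
/- Let f, h be probability densities on ℝ with finite second moments and the same first moment. Then for every N ≥ 1, the Gabetta–Toscani–Wennberg distance between the N-fold tensor products equals the one between the factors: d_{GTW,N}(f^{⊗N}, h^{⊗N}) = d_{GTW,1}(f, h). -/
open MeasureTheory Real Finset

noncomputable section

/-!
The Fourier transform of `f^{⊗N}` at `ξ` is `∏ i, f̂ (ξ i)`. Since `‖f̂‖, ‖ĥ‖ ≤ 1`, the difference
of two such products is bounded by `∑ i, ‖f̂ (ξ i) - ĥ (ξ i)‖ ≤ d_{GTW,1}(f, h) * ∑ i, (ξ i)^2`,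
which gives `≤`; restricting to `ξ = x • eᵢ` and using `f̂ 0 = ĥ 0 = 1` gives `≥`.
A real `⨆` of an unbounded family is the junk value `0`, so boundedness matters: it holds
because equal mass and mean make `f̂ - ĥ` vanish to second order at `0`, with a constant controlled
by the second moments.
-/

open Complex in
theorem norm_exp_I_mul_ofReal_sub_one_sub_le (x : ℝ) :
    ‖exp (I * x) - 1 - I * x‖ ≤ 2 * x ^ 2 := by
  have hnorm : ‖I * (x : ℂ)‖ = |x| := by simp
  rcases le_or_gt |x| 1 with hx | hx
  · calc ‖exp (I * x) - 1 - I * x‖ ≤ |x| ^ 2 := by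
          simpa [hnorm] using norm_exp_sub_one_sub_id_le (hnorm.le.trans hx)
      _ ≤ 2 * x ^ 2 := by rw [sq_abs]; nlinarith [sq_nonneg x]
  · calc ‖exp (I * x) - 1 - I * x‖ ≤ ‖exp (I * x) - 1‖ + ‖I * (x : ℂ)‖ := norm_sub_le _ _
      _ ≤ |x| + |x| := by
          rw [hnorm]; gcongr; exact Real.norm_exp_I_mul_ofReal_sub_one_le
      _ ≤ 2 * x ^ 2 := by nlinarith [sq_abs x]

theorem Finset.norm_prod_sub_prod_le_sum {ι R : Type*} [NormedCommRing R] [NormOneClass R]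
    (s : Finset ι) {a b : ι → R} (ha : ∀ i ∈ s, ‖a i‖ ≤ 1) (hb : ∀ i ∈ s, ‖b i‖ ≤ 1) :
    ‖∏ i ∈ s, a i - ∏ i ∈ s, b i‖ ≤ ∑ i ∈ s, ‖a i - b i‖ := by
  induction s using Finset.cons_induction with
  | empty => simp
  | cons j s hj ih =>
    simp only [Finset.forall_mem_cons] at ha hb
    rw [Finset.prod_cons, Finset.prod_cons, Finset.sum_cons]
    have hbs : ‖∏ i ∈ s, b i‖ ≤ 1 :=
      (Finset.norm_prod_le _ _).trans (Finset.prod_le_one (fun _ _ ↦ norm_nonneg _) hb.2)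
    calc ‖a j * ∏ i ∈ s, a i - b j * ∏ i ∈ s, b i‖
        = ‖a j * (∏ i ∈ s, a i - ∏ i ∈ s, b i) + (a j - b j) * ∏ i ∈ s, b i‖ := by ring_nf
      _ ≤ ‖a j‖ * ‖∏ i ∈ s, a i - ∏ i ∈ s, b i‖ + ‖a j - b j‖ * ‖∏ i ∈ s, b i‖ :=
          (norm_add_le _ _).trans (add_le_add (norm_mul_le _ _) (norm_mul_le _ _))
      _ ≤ 1 * ∑ i ∈ s, ‖a i - b i‖ + ‖a j - b j‖ * 1 := by
          gcongr
          exacts [ha.1, ih ha.2 hb.2]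
      _ = ‖a j - b j‖ + ∑ i ∈ s, ‖a i - b i‖ := by ring

theorem norm_exp_neg_I_mul_ofReal (x : ℝ) : ‖Complex.exp (-Complex.I * x)‖ = 1 := by
  simpa using Complex.norm_exp_I_mul_ofReal (-x)

theorem integrable_ft1_integrand {g : ℝ → ℝ} (hg : Integrable g) (ξ : ℝ) :
    Integrable fun v : ℝ ↦ (g v : ℂ) * Complex.exp (-Complex.I * ((v * ξ : ℝ) : ℂ)) :=
  hg.ofReal.mul_bdd (by fun_prop) (.of_forall fun v ↦ (norm_exp_neg_I_mul_ofReal _).le)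

theorem ft1_zero (g : ℝ → ℝ) : ft1 g 0 = ((∫ x, g x : ℝ) : ℂ) := by
  simpa [ft1] using integral_complex_ofReal

theorem norm_ft1_le (g : ℝ → ℝ) (ξ : ℝ) : ‖ft1 g ξ‖ ≤ ∫ x, |g x| :=
  (norm_integral_le_integral_norm _).trans_eq <| by
    simp only [norm_mul, norm_exp_neg_I_mul_ofReal, mul_one, Complex.norm_real, Real.norm_eq_abs]

theorem IsProbDensity1.norm_ft1_le_one {g : ℝ → ℝ} (hg : IsProbDensity1 g) (ξ : ℝ) :
    ‖ft1 g ξ‖ ≤ 1 := by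
  obtain ⟨hg0, -, hg1⟩ := hg
  calc ‖ft1 g ξ‖ ≤ ∫ x, |g x| := norm_ft1_le g ξ
    _ = 1 := by simp_rw [abs_of_nonneg (hg0 _), hg1]

open Complex in
theorem norm_ft1_sub_taylor_le {g : ℝ → ℝ} (hg : Integrable g)
    (hg1 : Integrable fun x ↦ x * g x) (hg2 : Integrable fun x ↦ x ^ 2 * g x) (ξ : ℝ) :
    ‖ft1 g ξ - (∫ x, g x : ℝ) + I * ξ * (∫ x, x * g x : ℝ)‖ ≤ 2 * ξ ^ 2 * ∫ x, x ^ 2 * |g x| := by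
  have hrem : ∫ v, (g v : ℂ) * (exp (I * ↑(-(v * ξ))) - 1 - I * ↑(-(v * ξ)))
      = ft1 g ξ - (∫ x, g x : ℝ) + I * ξ * (∫ x, x * g x : ℝ) := by
    have hsplit : (fun v : ℝ ↦ (g v : ℂ) * (exp (I * ↑(-(v * ξ))) - 1 - I * ↑(-(v * ξ))))
        = fun v ↦
          ((g v : ℂ) * exp (-I * ((v * ξ : ℝ) : ℂ)) - g v) + I * ξ * ((v * g v : ℝ) : ℂ) := by
      funext v; push_cast; ring_nf
    have hF := integrable_ft1_integrand hg ξ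
    have hg' : Integrable fun v : ℝ ↦ (g v : ℂ) := hg.ofReal
    have hg1' : Integrable fun v : ℝ ↦ I * ξ * ((v * g v : ℝ) : ℂ) := hg1.ofReal.const_mul _
    have hFg : Integrable fun v : ℝ ↦ (g v : ℂ) * exp (-I * ((v * ξ : ℝ) : ℂ)) - g v := hF.sub hg'
    rw [hsplit, integral_add hFg hg1', integral_sub hF hg', integral_const_mul,
      integral_complex_ofReal, integral_complex_ofReal]
    rfl
  have hg2' : Integrable fun x ↦ x ^ 2 * |g x| := by
    simpa [abs_mul] using hg2.abs
  rw [← hrem, ← integral_const_mul]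
  refine norm_integral_le_of_norm_le (hg2'.const_mul _) (.of_forall fun v ↦ ?_)
  calc ‖(g v : ℂ) * (exp (I * ↑(-(v * ξ))) - 1 - I * ↑(-(v * ξ)))‖
      ≤ |g v| * (2 * (-(v * ξ)) ^ 2) := by
        rw [norm_mul, norm_real, Real.norm_eq_abs]
        gcongr
        exact norm_exp_I_mul_ofReal_sub_one_sub_le _
    _ = 2 * ξ ^ 2 * (v ^ 2 * |g v|) := by ring

theorem norm_ft1_sub_ft1_le {f h : ℝ → ℝ} (hf : Integrable f) (hh : Integrable h)
    (hf1 : Integrable fun x ↦ x * f x) (hh1 : Integrable fun x ↦ x * h x)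
    (hf2 : Integrable fun x ↦ x ^ 2 * f x) (hh2 : Integrable fun x ↦ x ^ 2 * h x)
    (hmass : ∫ x, f x = ∫ x, h x) (hmean : ∫ x, x * f x = ∫ x, x * h x) (ξ : ℝ) :
    ‖ft1 f ξ - ft1 h ξ‖ ≤ 2 * ((∫ x, x ^ 2 * |f x|) + ∫ x, x ^ 2 * |h x|) * ξ ^ 2 := by
  have hsplit : ft1 f ξ - ft1 h ξ
      = (ft1 f ξ - (∫ x, f x : ℝ) + Complex.I * ξ * (∫ x, x * f x : ℝ))
        - (ft1 h ξ - (∫ x, h x : ℝ) + Complex.I * ξ * (∫ x, x * h x : ℝ)) := by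
    rw [hmass, hmean]; ring
  rw [hsplit]
  refine (norm_sub_le _ _).trans ?_
  linarith [norm_ft1_sub_taylor_le hf hf1 hf2 ξ, norm_ft1_sub_taylor_le hh hh1 hh2 ξ]

theorem ft_tensorPow (g : ℝ → ℝ) (N : ℕ) (ξ : V N) :
    ft (tensorPow g N) ξ = ∏ i, ft1 g (ξ i) := by
  simp only [ft, ft1]
  rw [← integral_fintype_prod_eq_prod
    (fun i (x : ℝ) ↦ (g x : ℂ) * Complex.exp (-Complex.I * ((x * ξ i : ℝ) : ℂ)))]
  congr 1 with v
  simp only [tensorPow, Finset.prod_mul_distrib, ← Complex.exp_sum, Complex.ofReal_prod,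
    Complex.ofReal_sum, Finset.mul_sum]

theorem ft_tensorPow_single {g : ℝ → ℝ} (hg : ∫ x, g x = 1) {N : ℕ} (i : Fin N) (x : ℝ) :
    ft (tensorPow g N) (Pi.single i x) = ft1 g x := by
  rw [ft_tensorPow, Finset.prod_eq_single i (fun j _ hj ↦ ?_) (by simp)]
  · simp
  · simp [Pi.single_eq_of_ne hj, ft1_zero, hg]

theorem norm_ft_tensorPow_sub_le {f h : ℝ → ℝ} (hf : ∀ ξ, ‖ft1 f ξ‖ ≤ 1)
    (hh : ∀ ξ, ‖ft1 h ξ‖ ≤ 1) {C : ℝ} (hC : ∀ ξ, ‖ft1 f ξ - ft1 h ξ‖ ≤ C * ξ ^ 2)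
    {N : ℕ} (ξ : V N) :
    ‖ft (tensorPow f N) ξ - ft (tensorPow h N) ξ‖ ≤ C * ∑ i, ξ i ^ 2 := by
  rw [ft_tensorPow, ft_tensorPow, Finset.mul_sum]
  exact (Finset.norm_prod_sub_prod_le_sum _ (fun i _ ↦ hf _) fun i _ ↦ hh _).trans
    (Finset.sum_le_sum fun i _ ↦ hC _)

theorem sum_sq_pos_of_ne_zero {N : ℕ} {ξ : V N} (hξ : ξ ≠ 0) : 0 < ∑ i, ξ i ^ 2 := by
  obtain ⟨i, hi⟩ := Function.ne_iff.1 hξ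
  exact Finset.sum_pos' (fun j _ ↦ sq_nonneg _) ⟨i, Finset.mem_univ i, pow_two_pos_of_ne_zero hi⟩

theorem norm_ft1_sub_le_dGTW1_mul {f h : ℝ → ℝ}
    (hbdd : BddAbove (Set.range fun ξ : {ξ : ℝ // ξ ≠ 0} ↦ ‖ft1 f ξ - ft1 h ξ‖ / ξ.1 ^ 2))
    (h0 : ft1 f 0 = ft1 h 0) (ξ : ℝ) :
    ‖ft1 f ξ - ft1 h ξ‖ ≤ dGTW1 f h * ξ ^ 2 := by
  rcases eq_or_ne ξ 0 with rfl | hξ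
  · simp [h0]
  · exact (div_le_iff₀ (pow_two_pos_of_ne_zero hξ)).1 (le_ciSup hbdd ⟨ξ, hξ⟩)

theorem dGTW1_le_dGTW_tensorPow {f h : ℝ → ℝ} (hf : ∫ x, f x = 1) (hh : ∫ x, h x = 1)
    {N : ℕ} (i : Fin N) (hbdd : BddAbove (Set.range fun ξ : {ξ : V N // ξ ≠ 0} ↦
      ‖ft (tensorPow f N) ξ - ft (tensorPow h N) ξ‖ / ∑ i, ξ.1 i ^ 2)) :
    dGTW1 f h ≤ dGTW (tensorPow f N) (tensorPow h N) := by
  rw [dGTW1, dGTW]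
  have : Nonempty {ξ : ℝ // ξ ≠ 0} := ⟨⟨1, one_ne_zero⟩⟩
  refine ciSup_le fun ξ ↦ ?_
  have hsingle : (Pi.single i ξ.1 : V N) ≠ 0 := by simpa using ξ.2
  convert le_ciSup hbdd ⟨_, hsingle⟩ using 1
  simp [ft_tensorPow_single hf, ft_tensorPow_single hh, Pi.single_apply]

theorem statement_16 (f h : ℝ → ℝ) (hf : IsProbDensity1 f) (hh : IsProbDensity1 h)
    (hf1 : Integrable (fun x => x * f x)) (hh1 : Integrable (fun x => x * h x))
    (hf2 : Integrable (fun x => x ^ 2 * f x)) (hh2 : Integrable (fun x => x ^ 2 * h x))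
    (hmean : ∫ x, x * f x = ∫ x, x * h x) (N : ℕ) (hN : 1 ≤ N) :
    dGTW (tensorPow f N) (tensorPow h N) = dGTW1 f h := by
  have hmass : ∫ x, f x = ∫ x, h x := hf.2.2.trans hh.2.2.symm
  have hC := norm_ft1_sub_ft1_le hf.2.1 hh.2.1 hf1 hh1 hf2 hh2 hmass hmean
  have hbdd1 : BddAbove (Set.range fun ξ : {ξ : ℝ // ξ ≠ 0} ↦ ‖ft1 f ξ - ft1 h ξ‖ / ξ.1 ^ 2) :=
    ⟨_, Set.forall_mem_range.2 fun ξ ↦ (div_le_iff₀ (pow_two_pos_of_ne_zero ξ.2)).2 (hC ξ.1)⟩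
  have hdGTW1 := norm_ft1_sub_le_dGTW1_mul hbdd1 (by rw [ft1_zero, ft1_zero, hmass])
  have hratio : ∀ ξ : {ξ : V N // ξ ≠ 0},
      ‖ft (tensorPow f N) ξ - ft (tensorPow h N) ξ‖ / ∑ i, ξ.1 i ^ 2 ≤ dGTW1 f h :=
    fun ξ ↦ (div_le_iff₀ (sum_sq_pos_of_ne_zero ξ.2)).2 <|
      norm_ft_tensorPow_sub_le hf.norm_ft1_le_one hh.norm_ft1_le_one hdGTW1 ξ.1
  have : Nonempty {ξ : V N // ξ ≠ 0} := ⟨⟨Pi.single ⟨0, hN⟩ 1, by simp⟩⟩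
  exact (ciSup_le hratio).antisymm <|
    dGTW1_le_dGTW_tensorPow hf.2.2 hh.2.2 ⟨0, hN⟩ ⟨_, Set.forall_mem_range.2 hratio⟩
end
end

section
/- If μ_N and ν_N are probability measures on ℝ^N with finite second moments that are invariant under permutations of the coordinates, then W_{2,1}(Π₁(μ_N), Π₁(ν_N)) ≤ (1/√N) · W_{2,N}(μ_N, ν_N), where Π₁ denotes the first marginal. -/
open MeasureTheory Real Finset

noncomputable section

/-!
Given a coupling `γ` of `μ` and `ν`, average over `k` the laws of the coordinate pairs
`(x k, y k)` under `γ`. By exchangeability each of these laws couples the first marginals, hence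
so does their average, and the cost of the average is `1/N` times the cost of `γ`. Taking the
infimum over `γ` gives the bound.
-/

open scoped ENNReal

lemma inv_card_smul_sum_const {ι M : Type*} [Fintype ι] [Nonempty ι] [AddCommMonoid M]
    [Module ℝ≥0∞ M] (m : M) : (Fintype.card ι : ℝ≥0∞)⁻¹ • ∑ _i : ι, m = m := by
  rw [Finset.sum_const, Finset.card_univ, ← Nat.cast_smul_eq_nsmul ℝ≥0∞, smul_smul,
    ENNReal.inv_mul_cancel (by simp) (ENNReal.natCast_ne_top _), one_smul]

section Coupling

variable {α β : Type*} [MeasurableSpace α] [MeasurableSpace β]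
  {γ : Measure (α × β)} {μ : Measure α} {ν : Measure β}

lemma coupling_prod [IsProbabilityMeasure μ] [IsProbabilityMeasure ν] :
    Coupling (μ.prod ν) μ ν :=
  ⟨Measure.map_fst_prod.trans (by simp), Measure.map_snd_prod.trans (by simp)⟩

lemma Coupling.map_prodMap {α' β' : Type*} [MeasurableSpace α'] [MeasurableSpace β']
    (h : Coupling γ μ ν) {f : α → α'} {g : β → β'} (hf : Measurable f) (hg : Measurable g) :
    Coupling (γ.map (Prod.map f g)) (μ.map f) (ν.map g) := by
  refine ⟨?_, ?_⟩
  · rw [Measure.map_map measurable_fst (hf.prodMap hg), ← h.1,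
      Measure.map_map hf measurable_fst]
    rfl
  · rw [Measure.map_map measurable_snd (hf.prodMap hg), ← h.2,
      Measure.map_map hg measurable_snd]
    rfl

lemma Coupling.average {ι : Type*} [Fintype ι] [Nonempty ι] {γ : ι → Measure (α × β)}
    (h : ∀ i, Coupling (γ i) μ ν) :
    Coupling ((Fintype.card ι : ℝ≥0∞)⁻¹ • ∑ i, γ i) μ ν := by
  refine ⟨?_, ?_⟩
  · rw [Measure.map_smul, ← Measure.mapₗ_apply_of_measurable measurable_fst, map_sum]
    simp only [Measure.mapₗ_apply_of_measurable measurable_fst, fun i => (h i).1,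
      inv_card_smul_sum_const]
  · rw [Measure.map_smul, ← Measure.mapₗ_apply_of_measurable measurable_snd, map_sum]
    simp only [Measure.mapₗ_apply_of_measurable measurable_snd, fun i => (h i).2,
      inv_card_smul_sum_const]

lemma Coupling.memLp_comp_fst {E : Type*} [NormedAddCommGroup E] {p : ℝ≥0∞} {f : α → E}
    (h : Coupling γ μ ν) (hf : MemLp f p μ) : MemLp (fun x => f x.1) p γ := by
  rw [← h.1] at hf
  exact (memLp_map_measure_iff hf.1 measurable_fst.aemeasurable).1 hf

lemma Coupling.memLp_comp_snd {E : Type*} [NormedAddCommGroup E] {p : ℝ≥0∞} {f : β → E}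
    (h : Coupling γ μ ν) (hf : MemLp f p ν) : MemLp (fun x => f x.2) p γ := by
  rw [← h.2] at hf
  exact (memLp_map_measure_iff hf.1 measurable_snd.aemeasurable).1 hf

end Coupling

lemma W2r_le_sqrt_integral {μ ν : Measure ℝ} {η : Measure (ℝ × ℝ)} (h : Coupling η μ ν) :
    W2r μ ν ≤ Real.sqrt (∫ p, (p.1 - p.2) ^ 2 ∂η) :=
  csInf_le ⟨0, by rintro _ ⟨_, _, rfl⟩; exact Real.sqrt_nonneg _⟩ ⟨η, h, rfl⟩

lemma le_W2 {N : ℕ} {μ ν : Measure (V N)} [IsProbabilityMeasure μ] [IsProbabilityMeasure ν]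
    {c : ℝ} (h : ∀ γ, Coupling γ μ ν → c ≤ Real.sqrt (∫ p, ∑ i, (p.1 i - p.2 i) ^ 2 ∂γ)) :
    c ≤ W2 μ ν :=
  le_csInf ⟨_, μ.prod ν, coupling_prod, rfl⟩ (by rintro _ ⟨γ, hγ, rfl⟩; exact h γ hγ)

section Coordinates

variable {ι : Type*}

lemma map_eval_eq_of_map_perm_eq [DecidableEq ι] {β : Type*} [MeasurableSpace β]
    {μ : Measure (ι → β)} (hμ : ∀ σ : Equiv.Perm ι, μ.map (fun v => v ∘ σ) = μ) (i j : ι) :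
    μ.map (fun v => v i) = μ.map (fun v => v j) := by
  have hswap : Measurable fun v : ι → β => v ∘ Equiv.swap j i :=
    measurable_pi_lambda _ fun _ => measurable_pi_apply _
  conv_rhs => rw [← hμ (Equiv.swap j i), Measure.map_map (measurable_pi_apply j) hswap]
  congr 1
  ext v
  simp

def coordPair (k : ι) (p : (ι → ℝ) × (ι → ℝ)) : ℝ × ℝ := (p.1 k, p.2 k)

lemma measurable_coordPair (k : ι) : Measurable (coordPair k) :=
  ((measurable_pi_apply k).comp measurable_fst).prodMk
    ((measurable_pi_apply k).comp measurable_snd)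

variable [Fintype ι]

lemma memLp_two_apply_of_integrable_sum_sq {μ : Measure (ι → ℝ)}
    (hμ : Integrable (fun v => ∑ i, v i ^ 2) μ) (k : ι) : MemLp (fun v => v k) 2 μ := by
  have hk : AEStronglyMeasurable (fun v : ι → ℝ => v k) μ :=
    (measurable_pi_apply k).aestronglyMeasurable
  refine (memLp_two_iff_integrable_sq hk).2 (hμ.mono' (hk.pow 2) (ae_of_all _ fun v => ?_))
  rw [Real.norm_of_nonneg (sq_nonneg _)]
  exact Finset.single_le_sum (f := fun i => v i ^ 2) (fun i _ => sq_nonneg _) (mem_univ k)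

def coordinateAverage (γ : Measure ((ι → ℝ) × (ι → ℝ))) : Measure (ℝ × ℝ) :=
  (Fintype.card ι : ℝ≥0∞)⁻¹ • ∑ k, γ.map (coordPair k)

lemma integral_sq_sub_coordinateAverage {γ : Measure ((ι → ℝ) × (ι → ℝ))}
    (hγ : ∀ k, Integrable (fun p => (p.1 k - p.2 k) ^ 2) γ) :
    ∫ p, (p.1 - p.2) ^ 2 ∂(coordinateAverage γ) =
      (Fintype.card ι : ℝ)⁻¹ * ∫ p, ∑ k, (p.1 k - p.2 k) ^ 2 ∂γ := by
  have hcost : Continuous fun p : ℝ × ℝ => (p.1 - p.2) ^ 2 := by fun_prop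
  have integral_map_pair (k : ι) :
      ∫ p, (p.1 - p.2) ^ 2 ∂(γ.map (coordPair k)) = ∫ p, (p.1 k - p.2 k) ^ 2 ∂γ :=
    integral_map (measurable_coordPair k).aemeasurable hcost.aestronglyMeasurable
  have integrable_map_pair (k : ι) :
      Integrable (fun p : ℝ × ℝ => (p.1 - p.2) ^ 2) (γ.map (coordPair k)) :=
    (integrable_map_measure hcost.aestronglyMeasurable
      (measurable_coordPair k).aemeasurable).2 (hγ k)
  rw [coordinateAverage, integral_smul_measure,
    integral_finsetSum_measure fun k _ => integrable_map_pair k]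
  simp only [integral_map_pair, ← integral_finsetSum _ fun k _ => hγ k, ENNReal.toReal_inv,
    ENNReal.toReal_natCast, smul_eq_mul]

end Coordinates

lemma W2r_map_eval_le_of_coupling {N : ℕ} [NeZero N] {μ ν : Measure (V N)}
    (hμ2 : Integrable (fun v : V N => ∑ i, v i ^ 2) μ)
    (hν2 : Integrable (fun v : V N => ∑ i, v i ^ 2) ν)
    (hμsym : ∀ σ : Equiv.Perm (Fin N), μ.map (fun v => v ∘ σ) = μ)
    (hνsym : ∀ σ : Equiv.Perm (Fin N), ν.map (fun v => v ∘ σ) = ν)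
    {γ : Measure (V N × V N)} (hγ : Coupling γ μ ν) (i : Fin N) :
    W2r (μ.map fun v => v i) (ν.map fun v => v i) ≤
      (Real.sqrt N)⁻¹ * Real.sqrt (∫ p, ∑ k, (p.1 k - p.2 k) ^ 2 ∂γ) := by
  have hcoupling : Coupling (coordinateAverage γ) (μ.map fun v => v i) (ν.map fun v => v i) :=
    Coupling.average fun k => by
      rw [map_eval_eq_of_map_perm_eq hμsym i k, map_eval_eq_of_map_perm_eq hνsym i k]
      exact hγ.map_prodMap (measurable_pi_apply k) (measurable_pi_apply k)
  have hintegrable (k : Fin N) : Integrable (fun p : V N × V N => (p.1 k - p.2 k) ^ 2) γ :=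
    ((hγ.memLp_comp_fst (memLp_two_apply_of_integrable_sum_sq hμ2 k)).sub
      (hγ.memLp_comp_snd (memLp_two_apply_of_integrable_sum_sq hν2 k))).integrable_sq
  calc W2r (μ.map fun v => v i) (ν.map fun v => v i)
      ≤ Real.sqrt (∫ p, (p.1 - p.2) ^ 2 ∂(coordinateAverage γ)) :=
        W2r_le_sqrt_integral hcoupling
    _ = (Real.sqrt N)⁻¹ * Real.sqrt (∫ p, ∑ k, (p.1 k - p.2 k) ^ 2 ∂γ) := by
        rw [integral_sq_sub_coordinateAverage hintegrable, Fintype.card_fin,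
          Real.sqrt_mul (by positivity), Real.sqrt_inv]

theorem statement_19 (N : ℕ) (hN : 1 ≤ N) (μ ν : Measure (V N))
    [IsProbabilityMeasure μ] [IsProbabilityMeasure ν]
    (hμ2 : Integrable (fun v : V N => ∑ i, v i ^ 2) μ)
    (hν2 : Integrable (fun v : V N => ∑ i, v i ^ 2) ν)
    (hμsym : ∀ σ : Equiv.Perm (Fin N), μ.map (fun v => v ∘ σ) = μ)
    (hνsym : ∀ σ : Equiv.Perm (Fin N), ν.map (fun v => v ∘ σ) = ν) :
    W2r (μ.map fun v : V N => v ⟨0, by omega⟩) (ν.map fun v : V N => v ⟨0, by omega⟩) ≤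
      (Real.sqrt N)⁻¹ * W2 μ ν := by
  have : NeZero N := ⟨by omega⟩
  have hsqrtN : 0 < Real.sqrt N := Real.sqrt_pos.2 (by exact_mod_cast hN)
  rw [le_inv_mul_iff₀ hsqrtN]
  refine le_W2 fun γ hγ => ?_
  rw [← le_inv_mul_iff₀ hsqrtN]
  exact W2r_map_eval_le_of_coupling hμ2 hν2 hμsym hνsym hγ _
end
end
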